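/- Let (σ₁,σ₂) be a local umbilic-free Legendre map in curvature line coordinates on U, with σ₁,σ₂ at least three times continuously differentiable. Then at every point of U, each of the vectors σ₁, ∂_vσ₁, ∂_v∂_vσ₁ is orthogonal with respect to ⟨,⟩ to each of the vectors σ₂, ∂_uσ₂, ∂_u∂_uσ₂ (nine orthogonality relations). That is, the Lie cyclide bundles S₁ = span{σ₁, ∂_vσ₁, ∂_v∂_vσ₁} and S₂ = span{σ₂, ∂_uσ₂, ∂_u∂_uσ₂} are orthogonal at every point. -/

import Mathlib

noncomputable section

/-- `ℝ^{4,2}`: `ℝ^6` with a bilinear form of signature (4,2). -/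
abbrev V6 : Type := Fin 6 → ℝ

/-- The symmetric bilinear form of signature (4,2) on `ℝ^6`. -/
def form (x y : V6) : ℝ :=
  x 0 * y 0 + x 1 * y 1 + x 2 * y 2 + x 3 * y 3 - x 4 * y 4 - x 5 * y 5

/-- Partial derivative in the first (`u`) coordinate. -/
def pu (σ : ℝ × ℝ → V6) (p : ℝ × ℝ) : V6 := fderiv ℝ σ p (1, 0)

/-- Partial derivative in the second (`v`) coordinate. -/
def pv (σ : ℝ × ℝ → V6) (p : ℝ × ℝ) : V6 := fderiv ℝ σ p (0, 1)

/-- The contact plane `f = span{σ₁, σ₂}`. -/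
def spanF (σ₁ σ₂ : ℝ × ℝ → V6) (p : ℝ × ℝ) : Submodule ℝ V6 :=
  Submodule.span ℝ {σ₁ p, σ₂ p}

/-- A local umbilic-free Legendre map in curvature line coordinates `(u,v)` on `U`,
given by lifts `σ₁, σ₂` of the two curvature sphere congruences, with curvature
directions `T₁ = ∂_u` (for `s₁ = span{σ₁}`) and `T₂ = ∂_v` (for `s₂ = span{σ₂}`). -/
structure IsLegendre (U : Set (ℝ × ℝ)) (σ₁ σ₂ : ℝ × ℝ → V6) : Prop where
  open_U : IsOpen U
  smooth₁ : ContDiffOn ℝ 3 σ₁ U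
  smooth₂ : ContDiffOn ℝ 3 σ₂ U
  indep : ∀ p ∈ U, LinearIndependent ℝ ![σ₁ p, σ₂ p]
  iso₁₁ : ∀ p ∈ U, form (σ₁ p) (σ₁ p) = 0
  iso₁₂ : ∀ p ∈ U, form (σ₁ p) (σ₂ p) = 0
  iso₂₂ : ∀ p ∈ U, form (σ₂ p) (σ₂ p) = 0
  contact_u : ∀ p ∈ U, form (pu σ₁ p) (σ₂ p) = 0
  contact_v : ∀ p ∈ U, form (pv σ₁ p) (σ₂ p) = 0
  curv₁ : ∀ p ∈ U, pu σ₁ p ∈ spanF σ₁ σ₂ p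
  curv₂ : ∀ p ∈ U, pv σ₂ p ∈ spanF σ₁ σ₂ p
  umb₁ : ∀ p ∈ U, pv σ₁ p ∉ spanF σ₁ σ₂ p
  umb₂ : ∀ p ∈ U, pu σ₂ p ∉ spanF σ₁ σ₂ p

/-! The contact plane `f = span{σ₁, σ₂}` is isotropic and orthogonal to all first derivatives
of `σ₁, σ₂`. If `Y ⊥ f` on `U`, the product rule gives `⟨σ₁, ∂_u Y⟩ = -⟨∂_u σ₁, Y⟩ = 0`
since `∂_u σ₁ ∈ f`, so `∂_u Y ⊥ f` as soon as also `⟨∂_u σ₂, Y⟩ = 0`; symmetrically for `∂_v`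
with `σ₁, σ₂` exchanged. Alternating this with the product rule and Schwarz's theorem yields
the nine relations; the last one reduces, by two more applications of the product rule, to
`⟨∂_u∂_v σ₁, ∂_u∂_v σ₂⟩ = -⟨∂_u∂_u∂_v σ₁, ∂_v σ₂⟩ = 0`. -/

theorem ContinuousLinearMap.fderiv_bilinear_add_eq_zero {𝕜 E F G H : Type*}
    [NontriviallyNormedField 𝕜] [NormedAddCommGroup E] [NormedSpace 𝕜 E]
    [NormedAddCommGroup F] [NormedSpace 𝕜 F] [NormedAddCommGroup G] [NormedSpace 𝕜 G]
    [NormedAddCommGroup H] [NormedSpace 𝕜 H] (B : E →L[𝕜] F →L[𝕜] G) {U : Set H}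
    (hU : IsOpen U) {f : H → E} {g : H → F} (h0 : ∀ y ∈ U, B (f y) (g y) = 0) {x : H}
    (hx : x ∈ U) (hf : DifferentiableAt 𝕜 f x) (hg : DifferentiableAt 𝕜 g x) (w : H) :
    B (fderiv 𝕜 f x w) (g x) + B (f x) (fderiv 𝕜 g x w) = 0 := by
  have hconst : fderiv 𝕜 (fun y => B (f y) (g y)) x = 0 :=
    (Filter.eventuallyEq_of_mem (hU.mem_nhds hx) h0).fderiv_eq.trans (fderiv_const_apply 0)
  rw [B.fderiv_of_bilinear hf hg] at hconst
  simpa [add_comm] using congrArg (· w) hconst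

theorem form_comm (x y : V6) : form x y = form y x := by
  simp only [form]; ring

def formL : V6 →L[ℝ] V6 →L[ℝ] ℝ :=
  LinearMap.toContinuousLinearMap (LinearMap.toContinuousLinearMap.toLinearMap ∘ₗ
    LinearMap.mk₂ ℝ form (fun _ _ _ => by simp only [form, Pi.add_apply]; ring)
      (fun _ _ _ => by simp only [form, Pi.smul_apply, smul_eq_mul]; ring)
      (fun _ _ _ => by simp only [form, Pi.add_apply]; ring)
      (fun _ _ _ => by simp only [form, Pi.smul_apply, smul_eq_mul]; ring))

theorem formL_apply (x y : V6) : formL x y = form x y := rfl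

theorem form_eq_zero_of_mem_span_pair {a b x y : V6} (hx : x ∈ Submodule.span ℝ {a, b})
    (ha : form a y = 0) (hb : form b y = 0) : form x y = 0 := by
  obtain ⟨s, t, rfl⟩ := Submodule.mem_span_pair.mp hx
  rw [← formL_apply] at ha hb ⊢
  simp [ha, hb]

section Partials

variable {U : Set (ℝ × ℝ)} {σ X Y : ℝ × ℝ → V6}

theorem ContDiffOn.pu {m n : WithTop ℕ∞} (h : ContDiffOn ℝ n σ U) (hU : IsOpen U)
    (hmn : m + 1 ≤ n) : ContDiffOn ℝ m (pu σ) U :=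
  (ContinuousLinearMap.apply ℝ V6 ((1 : ℝ), (0 : ℝ))).contDiff.comp_contDiffOn
    (h.fderiv_of_isOpen hU hmn)

theorem ContDiffOn.pv {m n : WithTop ℕ∞} (h : ContDiffOn ℝ n σ U) (hU : IsOpen U)
    (hmn : m + 1 ≤ n) : ContDiffOn ℝ m (pv σ) U :=
  (ContinuousLinearMap.apply ℝ V6 ((0 : ℝ), (1 : ℝ))).contDiff.comp_contDiffOn
    (h.fderiv_of_isOpen hU hmn)

theorem pu_pv_eqOn (h : ContDiffOn ℝ 2 σ U) (hU : IsOpen U) :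
    Set.EqOn (pu (pv σ)) (pv (pu σ)) U := by
  intro p hp
  have h2 : ContDiffAt ℝ 2 σ p := h.contDiffAt (hU.mem_nhds hp)
  have hd : DifferentiableAt ℝ (fderiv ℝ σ) p :=
    (h2.fderiv_right (m := 1) le_rfl).differentiableAt one_ne_zero
  have hcomp (w : ℝ × ℝ) :
      (fun q => fderiv ℝ σ q w) = ContinuousLinearMap.apply ℝ V6 w ∘ fderiv ℝ σ := rfl
  change fderiv ℝ (fun q => fderiv ℝ σ q (0, 1)) p (1, 0) =
    fderiv ℝ (fun q => fderiv ℝ σ q (1, 0)) p (0, 1)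
  rw [hcomp, hcomp, fderiv_comp p (ContinuousLinearMap.differentiableAt _) hd,
    fderiv_comp p (ContinuousLinearMap.differentiableAt _) hd]
  simpa using h2.isSymmSndFDerivAt (by simp) (1, 0) (0, 1)

theorem form_fderiv_eq_neg (hU : IsOpen U) (hX : ContDiffOn ℝ 1 X U) (hY : ContDiffOn ℝ 1 Y U)
    (h0 : ∀ q ∈ U, form (X q) (Y q) = 0) {p : ℝ × ℝ} (hp : p ∈ U) (w : ℝ × ℝ) :
    form (fderiv ℝ X p w) (Y p) = -form (X p) (fderiv ℝ Y p w) := by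
  have hdiff {Z : ℝ × ℝ → V6} (hZ : ContDiffOn ℝ 1 Z U) : DifferentiableAt ℝ Z p :=
    (hZ.differentiableOn one_ne_zero).differentiableAt (hU.mem_nhds hp)
  have := formL.fderiv_bilinear_add_eq_zero hU h0 hp (hdiff hX) (hdiff hY) w
  simp only [formL_apply] at this
  linarith

theorem form_pu_eq_neg (hU : IsOpen U) (hX : ContDiffOn ℝ 1 X U) (hY : ContDiffOn ℝ 1 Y U)
    (h0 : ∀ q ∈ U, form (X q) (Y q) = 0) {p : ℝ × ℝ} (hp : p ∈ U) :
    form (pu X p) (Y p) = -form (X p) (pu Y p) :=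
  form_fderiv_eq_neg hU hX hY h0 hp (1, 0)

theorem form_pv_eq_neg (hU : IsOpen U) (hX : ContDiffOn ℝ 1 X U) (hY : ContDiffOn ℝ 1 Y U)
    (h0 : ∀ q ∈ U, form (X q) (Y q) = 0) {p : ℝ × ℝ} (hp : p ∈ U) :
    form (pv X p) (Y p) = -form (X p) (pv Y p) :=
  form_fderiv_eq_neg hU hX hY h0 hp (0, 1)

end Partials

def PerpF (U : Set (ℝ × ℝ)) (σ₁ σ₂ Y : ℝ × ℝ → V6) : Prop :=
  ∀ p ∈ U, form (σ₁ p) (Y p) = 0 ∧ form (σ₂ p) (Y p) = 0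

theorem PerpF.form_eq_zero {U : Set (ℝ × ℝ)} {σ₁ σ₂ Y : ℝ × ℝ → V6} (hY : PerpF U σ₁ σ₂ Y)
    {p : ℝ × ℝ} (hp : p ∈ U) {x : V6} (hx : x ∈ spanF σ₁ σ₂ p) : form x (Y p) = 0 :=
  form_eq_zero_of_mem_span_pair hx (hY p hp).1 (hY p hp).2

namespace IsLegendre

variable {U : Set (ℝ × ℝ)} {σ₁ σ₂ Y : ℝ × ℝ → V6} (hL : IsLegendre U σ₁ σ₂)
include hL

theorem contDiffOn_one_fst : ContDiffOn ℝ 1 σ₁ U := hL.smooth₁.of_le (by norm_num)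

theorem contDiffOn_one_snd : ContDiffOn ℝ 1 σ₂ U := hL.smooth₂.of_le (by norm_num)

theorem contDiffOn_two_snd : ContDiffOn ℝ 2 σ₂ U := hL.smooth₂.of_le (by norm_num)

theorem contDiffOn_two_pv_fst : ContDiffOn ℝ 2 (pv σ₁) U := hL.smooth₁.pv hL.open_U le_rfl

theorem contDiffOn_two_pu_snd : ContDiffOn ℝ 2 (pu σ₂) U := hL.smooth₂.pu hL.open_U le_rfl

theorem contDiffOn_one_pv_fst : ContDiffOn ℝ 1 (pv σ₁) U :=
  hL.contDiffOn_two_pv_fst.of_le one_le_two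

theorem contDiffOn_one_pu_snd : ContDiffOn ℝ 1 (pu σ₂) U :=
  hL.contDiffOn_two_pu_snd.of_le one_le_two

theorem perpF_fst : PerpF U σ₁ σ₂ σ₁ := fun p hp =>
  ⟨hL.iso₁₁ p hp, form_comm (σ₂ p) (σ₁ p) ▸ hL.iso₁₂ p hp⟩

theorem perpF_snd : PerpF U σ₁ σ₂ σ₂ := fun p hp => ⟨hL.iso₁₂ p hp, hL.iso₂₂ p hp⟩

theorem perpF_of_mem_spanF (hY : ∀ p ∈ U, Y p ∈ spanF σ₁ σ₂ p) : PerpF U σ₁ σ₂ Y :=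
  fun p hp => ⟨form_comm (σ₁ p) (Y p) ▸ hL.perpF_fst.form_eq_zero hp (hY p hp),
    form_comm (σ₂ p) (Y p) ▸ hL.perpF_snd.form_eq_zero hp (hY p hp)⟩

theorem perpF_pv_snd : PerpF U σ₁ σ₂ (pv σ₂) := hL.perpF_of_mem_spanF hL.curv₂

theorem perpF_pv_fst : PerpF U σ₁ σ₂ (pv σ₁) := by
  intro p hp
  have h := form_pv_eq_neg hL.open_U hL.contDiffOn_one_fst hL.contDiffOn_one_fst hL.iso₁₁ hp
  rw [form_comm] at h
  exact ⟨by linarith, form_comm (σ₂ p) _ ▸ hL.contact_v p hp⟩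

theorem perpF_pu_snd : PerpF U σ₁ σ₂ (pu σ₂) := by
  intro p hp
  have h₁₂ := form_pu_eq_neg hL.open_U hL.contDiffOn_one_fst hL.contDiffOn_one_snd hL.iso₁₂ hp
  have h₂₂ := form_pu_eq_neg hL.open_U hL.contDiffOn_one_snd hL.contDiffOn_one_snd hL.iso₂₂ hp
  rw [hL.contact_u p hp] at h₁₂
  rw [form_comm] at h₂₂
  constructor <;> linarith

theorem form_fst_pu_eq_zero (hY : PerpF U σ₁ σ₂ Y) (hY₁ : ContDiffOn ℝ 1 Y U) {p : ℝ × ℝ}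
    (hp : p ∈ U) : form (σ₁ p) (pu Y p) = 0 := by
  rw [← neg_eq_zero, ← form_pu_eq_neg hL.open_U hL.contDiffOn_one_fst hY₁
    (fun q hq => (hY q hq).1) hp]
  exact hY.form_eq_zero hp (hL.curv₁ p hp)

theorem form_snd_pv_eq_zero (hY : PerpF U σ₁ σ₂ Y) (hY₁ : ContDiffOn ℝ 1 Y U) {p : ℝ × ℝ}
    (hp : p ∈ U) : form (σ₂ p) (pv Y p) = 0 := by
  rw [← neg_eq_zero, ← form_pv_eq_neg hL.open_U hL.contDiffOn_one_snd hY₁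
    (fun q hq => (hY q hq).2) hp]
  exact hY.form_eq_zero hp (hL.curv₂ p hp)

theorem perpF_pu (hY : PerpF U σ₁ σ₂ Y) (hY₁ : ContDiffOn ℝ 1 Y U)
    (h : ∀ p ∈ U, form (pu σ₂ p) (Y p) = 0) : PerpF U σ₁ σ₂ (pu Y) := by
  intro p hp
  refine ⟨hL.form_fst_pu_eq_zero hY hY₁ hp, ?_⟩
  rw [← neg_eq_zero, ← form_pu_eq_neg hL.open_U hL.contDiffOn_one_snd hY₁
    (fun q hq => (hY q hq).2) hp]
  exact h p hp

theorem perpF_pv (hY : PerpF U σ₁ σ₂ Y) (hY₁ : ContDiffOn ℝ 1 Y U)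
    (h : ∀ p ∈ U, form (pv σ₁ p) (Y p) = 0) : PerpF U σ₁ σ₂ (pv Y) := by
  intro p hp
  refine ⟨?_, hL.form_snd_pv_eq_zero hY hY₁ hp⟩
  rw [← neg_eq_zero, ← form_pv_eq_neg hL.open_U hL.contDiffOn_one_fst hY₁
    (fun q hq => (hY q hq).1) hp]
  exact h p hp

theorem form_pv_fst_pu_snd {p : ℝ × ℝ} (hp : p ∈ U) : form (pv σ₁ p) (pu σ₂ p) = 0 := by
  calc form (pv σ₁ p) (pu σ₂ p)
      = -form (σ₁ p) (pv (pu σ₂) p) :=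
        form_pv_eq_neg hL.open_U hL.contDiffOn_one_fst hL.contDiffOn_one_pu_snd
          (fun q hq => (hL.perpF_pu_snd q hq).1) hp
    _ = -form (σ₁ p) (pu (pv σ₂) p) := by
        rw [pu_pv_eqOn hL.contDiffOn_two_snd hL.open_U hp]
    _ = 0 := by
        rw [hL.form_fst_pu_eq_zero hL.perpF_pv_snd (hL.smooth₂.pv hL.open_U (by norm_num)) hp,
          neg_zero]

theorem perpF_pv_pu_snd : PerpF U σ₁ σ₂ (pv (pu σ₂)) :=
  hL.perpF_pv hL.perpF_pu_snd hL.contDiffOn_one_pu_snd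
    fun _ hp => hL.form_pv_fst_pu_snd hp

theorem perpF_pu_pv_fst : PerpF U σ₁ σ₂ (pu (pv σ₁)) :=
  hL.perpF_pu hL.perpF_pv_fst hL.contDiffOn_one_pv_fst
    fun _ hp => form_comm (pv σ₁ _) _ ▸ hL.form_pv_fst_pu_snd hp

theorem form_fst_pu_pu_snd {p : ℝ × ℝ} (hp : p ∈ U) : form (σ₁ p) (pu (pu σ₂) p) = 0 :=
  hL.form_fst_pu_eq_zero hL.perpF_pu_snd hL.contDiffOn_one_pu_snd hp

theorem form_pv_pv_fst_snd {p : ℝ × ℝ} (hp : p ∈ U) : form (pv (pv σ₁) p) (σ₂ p) = 0 :=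
  form_comm (σ₂ p) _ ▸ hL.form_snd_pv_eq_zero hL.perpF_pv_fst
    hL.contDiffOn_one_pv_fst hp

theorem form_pv_fst_pu_pu_snd {p : ℝ × ℝ} (hp : p ∈ U) :
    form (pv σ₁ p) (pu (pu σ₂) p) = 0 := by
  calc form (pv σ₁ p) (pu (pu σ₂) p)
      = -form (σ₁ p) (pv (pu (pu σ₂)) p) :=
        form_pv_eq_neg hL.open_U hL.contDiffOn_one_fst
          (hL.contDiffOn_two_pu_snd.pu hL.open_U le_rfl) (fun _ hq => hL.form_fst_pu_pu_snd hq) hp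
    _ = -form (σ₁ p) (pu (pv (pu σ₂)) p) := by
        rw [pu_pv_eqOn hL.contDiffOn_two_pu_snd hL.open_U hp]
    _ = 0 := by
        rw [hL.form_fst_pu_eq_zero hL.perpF_pv_pu_snd
          (hL.contDiffOn_two_pu_snd.pv hL.open_U le_rfl) hp, neg_zero]

theorem form_pv_pv_fst_pu_snd {p : ℝ × ℝ} (hp : p ∈ U) :
    form (pv (pv σ₁) p) (pu σ₂ p) = 0 := by
  calc form (pv (pv σ₁) p) (pu σ₂ p)
      = -form (pu (pv (pv σ₁)) p) (σ₂ p) := by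
        rw [form_pu_eq_neg hL.open_U (hL.contDiffOn_two_pv_fst.pv hL.open_U le_rfl)
          hL.contDiffOn_one_snd (fun _ hq => hL.form_pv_pv_fst_snd hq) hp, neg_neg]
    _ = -form (pv (pu (pv σ₁)) p) (σ₂ p) := by
        rw [pu_pv_eqOn hL.contDiffOn_two_pv_fst hL.open_U hp]
    _ = 0 := by
        rw [form_comm, hL.form_snd_pv_eq_zero hL.perpF_pu_pv_fst
          (hL.contDiffOn_two_pv_fst.pu hL.open_U le_rfl) hp, neg_zero]

theorem form_pv_fst_pv_pu_snd {p : ℝ × ℝ} (hp : p ∈ U) :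
    form (pv σ₁ p) (pv (pu σ₂) p) = 0 := by
  rw [← neg_eq_zero, ← form_pv_eq_neg hL.open_U hL.contDiffOn_one_pv_fst
    hL.contDiffOn_one_pu_snd (fun _ hq => hL.form_pv_fst_pu_snd hq) hp]
  exact hL.form_pv_pv_fst_pu_snd hp

theorem form_pu_snd_pu_pv_fst {p : ℝ × ℝ} (hp : p ∈ U) :
    form (pu σ₂ p) (pu (pv σ₁) p) = 0 := by
  rw [← neg_eq_zero, ← form_pu_eq_neg hL.open_U hL.contDiffOn_one_pu_snd
    hL.contDiffOn_one_pv_fst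
    (fun _ hq => form_comm (pv σ₁ _) _ ▸ hL.form_pv_fst_pu_snd hq) hp, form_comm]
  exact hL.form_pv_fst_pu_pu_snd hp

theorem perpF_pu_pu_pv_fst : PerpF U σ₁ σ₂ (pu (pu (pv σ₁))) :=
  hL.perpF_pu hL.perpF_pu_pv_fst (hL.contDiffOn_two_pv_fst.pu hL.open_U le_rfl)
    fun _ hp => hL.form_pu_snd_pu_pv_fst hp

theorem form_pu_pv_fst_pv_pu_snd {p : ℝ × ℝ} (hp : p ∈ U) :
    form (pu (pv σ₁) p) (pv (pu σ₂) p) = 0 := by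
  have hW : ContDiffOn ℝ 1 (pu (pv σ₁)) U := hL.contDiffOn_two_pv_fst.pu hL.open_U le_rfl
  calc form (pu (pv σ₁) p) (pv (pu σ₂) p)
      = form (pu (pv σ₁) p) (pu (pv σ₂) p) := by
        rw [pu_pv_eqOn hL.contDiffOn_two_snd hL.open_U hp]
    _ = -form (pu (pu (pv σ₁)) p) (pv σ₂ p) := by
        rw [form_pu_eq_neg hL.open_U hW (hL.smooth₂.pv hL.open_U (by norm_num))
          (fun q hq => form_comm (pv σ₂ q) _ ▸ hL.perpF_pu_pv_fst.form_eq_zero hq (hL.curv₂ q hq))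
          hp, neg_neg]
    _ = 0 := by
        rw [form_comm, hL.perpF_pu_pu_pv_fst.form_eq_zero hp (hL.curv₂ p hp), neg_zero]

theorem form_pv_pv_fst_pu_pu_snd {p : ℝ × ℝ} (hp : p ∈ U) :
    form (pv (pv σ₁) p) (pu (pu σ₂) p) = 0 := by
  calc form (pv (pv σ₁) p) (pu (pu σ₂) p)
      = -form (pv σ₁ p) (pv (pu (pu σ₂)) p) :=
        form_pv_eq_neg hL.open_U hL.contDiffOn_one_pv_fst
          (hL.contDiffOn_two_pu_snd.pu hL.open_U le_rfl)
          (fun _ hq => hL.form_pv_fst_pu_pu_snd hq) hp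
    _ = -form (pv σ₁ p) (pu (pv (pu σ₂)) p) := by
        rw [pu_pv_eqOn hL.contDiffOn_two_pu_snd hL.open_U hp]
    _ = form (pu (pv σ₁) p) (pv (pu σ₂) p) := by
        rw [form_pu_eq_neg hL.open_U hL.contDiffOn_one_pv_fst
          (hL.contDiffOn_two_pu_snd.pv hL.open_U le_rfl)
          (fun _ hq => hL.form_pv_fst_pv_pu_snd hq) hp]
    _ = 0 := hL.form_pu_pv_fst_pv_pu_snd hp

end IsLegendre

/-- The Lie cyclide bundles `S₁ = span{σ₁, ∂_vσ₁, ∂_v∂_vσ₁}` and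
`S₂ = span{σ₂, ∂_uσ₂, ∂_u∂_uσ₂}` of an umbilic-free Legendre map are orthogonal
at every point: all nine pairings vanish. -/
theorem lie_cyclide_bundles_orthogonal
    (U : Set (ℝ × ℝ)) (σ₁ σ₂ : ℝ × ℝ → V6)
    (hL : IsLegendre U σ₁ σ₂) :
    ∀ p ∈ U,
      form (σ₁ p) (σ₂ p) = 0 ∧
      form (σ₁ p) (pu σ₂ p) = 0 ∧
      form (σ₁ p) (pu (pu σ₂) p) = 0 ∧
      form (pv σ₁ p) (σ₂ p) = 0 ∧
      form (pv σ₁ p) (pu σ₂ p) = 0 ∧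
      form (pv σ₁ p) (pu (pu σ₂) p) = 0 ∧
      form (pv (pv σ₁) p) (σ₂ p) = 0 ∧
      form (pv (pv σ₁) p) (pu σ₂ p) = 0 ∧
      form (pv (pv σ₁) p) (pu (pu σ₂) p) = 0 := fun p hp =>
  ⟨hL.iso₁₂ p hp, (hL.perpF_pu_snd p hp).1, hL.form_fst_pu_pu_snd hp, hL.contact_v p hp,
    hL.form_pv_fst_pu_snd hp, hL.form_pv_fst_pu_pu_snd hp, hL.form_pv_pv_fst_snd hp,
    hL.form_pv_pv_fst_pu_snd hp, hL.form_pv_pv_fst_pu_pu_snd hp⟩
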